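/- Let Δ⁰ = {δ ∈ ℝᵐ : |δⱼ| ≤ δⱼ⁰} with δⱼ⁰ > 0, and suppose P = Pᵀ ≻ 0 and β > 0 satisfy: PA + AᵀP ≺ 0 and Gₖ + β(PA + AᵀP) ≺ 0 for every vertex δᵛₖ of Δ⁰, where Gₖ = P·D·diag(δᵛₖ) + (D·diag(δᵛₖ))ᵀP. Then for α = 1/β and every δ ∈ α·Δ⁰, the matrix P(A + D·diag(δ)) + (A + D·diag(δ))ᵀP is negative definite. -/
import Mathlib

open Matrix

/-- The rectangular "diagonal" matrix with the entries of `δ` on the diagonal,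
so that `D * rectDiag δ` realizes the matrix `D·diag(δ)` as an `n × n` matrix. -/
def rectDiag {m n : ℕ} (δ : Fin m → ℝ) : Matrix (Fin m) (Fin n) ℝ :=
  Matrix.of fun k j => if (k : ℕ) = (j : ℕ) then δ k else 0

lemma sum_mulVec' {n m : ℕ} (f : Fin m → Matrix (Fin n) (Fin n) ℝ) (x : Fin n → ℝ) :
    (∑ a, f a) *ᵥ x = ∑ a, f a *ᵥ x := by
  ext i
  simp [Matrix.mulVec, dotProduct, Finset.sum_apply, Finset.sum_mul, Matrix.sum_apply]
  rw [Finset.sum_comm]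

lemma dotProduct_sum' {n m : ℕ} (f : Fin m → Fin n → ℝ) (x : Fin n → ℝ) :
    x ⬝ᵥ (∑ a, f a) = ∑ a, x ⬝ᵥ f a := by
  simp [dotProduct, Finset.sum_apply, Finset.mul_sum]
  rw [Finset.sum_comm]

lemma rectDiag_sum {m n : ℕ} (δ : Fin m → ℝ) :
    rectDiag (n := n) δ = ∑ k, δ k • rectDiag (Pi.single k 1) := by
  ext i j
  simp only [rectDiag, Matrix.sum_apply, Matrix.smul_apply, Matrix.of_apply, smul_ite,
    smul_eq_mul, mul_zero, Pi.single_apply]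
  by_cases h : (i : ℕ) = (j : ℕ)
  · simp [h, Finset.sum_ite_eq']
  · simp [h]

lemma Q_lin {m n : ℕ} (P : Matrix (Fin n) (Fin n) ℝ) (D : Matrix (Fin n) (Fin m) ℝ)
    (x : Fin n → ℝ) (δ : Fin m → ℝ) :
    x ⬝ᵥ ((P * (D * rectDiag δ) + (D * rectDiag δ)ᵀ * P) *ᵥ x)
      = ∑ k, δ k *
        (x ⬝ᵥ ((P * (D * rectDiag (Pi.single k 1)) + (D * rectDiag (Pi.single k 1))ᵀ * P) *ᵥ x)) := by
  rw [rectDiag_sum δ]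
  simp [Matrix.mul_sum, Matrix.sum_mul, Matrix.transpose_sum, Matrix.transpose_smul,
    Matrix.mul_smul, Matrix.smul_mul, sum_mulVec', dotProduct_sum', smul_mulVec,
    dotProduct_smul, Matrix.add_mulVec, dotProduct_add, mul_add,
    Finset.sum_add_distrib]

theorem stmt5 {n m : ℕ} (A : Matrix (Fin n) (Fin n) ℝ) (D : Matrix (Fin n) (Fin m) ℝ)
    (δ0 : Fin m → ℝ) (hδ0 : ∀ j, 0 < δ0 j)
    (P : Matrix (Fin n) (Fin n) ℝ) (hP : P.PosDef) (β : ℝ) (hβ : 0 < β)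
    (hA : ∀ x : Fin n → ℝ, x ≠ 0 → x ⬝ᵥ ((P * A + Aᵀ * P) *ᵥ x) < 0)
    (hvert : ∀ s : Fin m → Bool,
      ∀ x : Fin n → ℝ, x ≠ 0 →
        x ⬝ᵥ (((P * (D * rectDiag (fun j => if s j then δ0 j else -δ0 j)) +
          (D * rectDiag (fun j => if s j then δ0 j else -δ0 j))ᵀ * P) +
          β • (P * A + Aᵀ * P)) *ᵥ x) < 0)
    (δ : Fin m → ℝ) (hδ : ∀ j, |δ j| ≤ (1 / β) * δ0 j) :
    ∀ x : Fin n → ℝ, x ≠ 0 →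
      x ⬝ᵥ ((P * (A + D * rectDiag δ) +
        (A + D * rectDiag δ)ᵀ * P) *ᵥ x) < 0 := by
  intro x hx
  set q0 : ℝ := x ⬝ᵥ ((P * A + Aᵀ * P) *ᵥ x) with hq0
  set c : Fin m → ℝ := fun k =>
    x ⬝ᵥ ((P * (D * rectDiag (Pi.single k 1)) + (D * rectDiag (Pi.single k 1))ᵀ * P) *ᵥ x) with hc
  have expand : x ⬝ᵥ ((P * (A + D * rectDiag δ) + (A + D * rectDiag δ)ᵀ * P) *ᵥ x)
      = q0 + x ⬝ᵥ ((P * (D * rectDiag δ) + (D * rectDiag δ)ᵀ * P) *ᵥ x) := by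
    simp only [mul_add, Matrix.transpose_add, Matrix.add_mul, Matrix.add_mulVec,
      dotProduct_add, hq0]
    ring
  rw [expand, Q_lin]
  -- the worst-case vertex
  set s : Fin m → Bool := fun k => decide (0 ≤ c k) with hs
  have hv := hvert s x hx
  rw [Matrix.add_mulVec, dotProduct_add, smul_mulVec,
    dotProduct_smul, Q_lin, smul_eq_mul] at hv
  -- hv : ∑ k, (if s k then δ0 k else -δ0 k) * c k + β * q0 < 0
  have hvertval : (∑ k, (if s k then δ0 k else -δ0 k) * c k) = ∑ k, δ0 k * |c k| := by
    refine Finset.sum_congr rfl fun k _ => ?_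
    by_cases h : 0 ≤ c k
    · simp [hs, h, abs_of_nonneg h]
    · rw [if_neg (by simp [hs, h]), abs_of_neg (lt_of_not_ge h)]; ring
  rw [hvertval] at hv
  have hbound : (∑ k, δ k * c k) ≤ (1 / β) * ∑ k, δ0 k * |c k| := by
    rw [Finset.mul_sum]
    refine Finset.sum_le_sum fun k _ => ?_
    calc δ k * c k ≤ |δ k * c k| := le_abs_self _
      _ = |δ k| * |c k| := abs_mul _ _
      _ ≤ ((1 / β) * δ0 k) * |c k| := by
          exact mul_le_mul_of_nonneg_right (hδ k) (abs_nonneg _)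
      _ = (1 / β) * (δ0 k * |c k|) := by ring
  have h2 : (1 / β) * (∑ k, δ0 k * |c k|) < (1 / β) * (-β * q0) := by
    apply mul_lt_mul_of_pos_left _ (by positivity)
    linarith
  have : (1 / β) * (-β * q0) = -q0 := by
    field_simp
  linarith
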